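/- If G is block-decomposable and a node o has four outgoing edges and no incoming edges (respectively, four incoming edges and no outgoing edges), then in every block decomposition of G the node o is the identification of the outlets of two outfork blocks (respectively, two infork blocks); in particular each of the four neighbors of o has degree 1 in G, and the connected component of o is the 5-node star with center o and all four edges directed away from o (respectively, toward o). -/

import Mathlib

/-!
Count, block by block, the net outflow at `o`: the number of block edges leaving `o` minus the
number entering it. Annihilation removes edges in opposite pairs, so these block contributions add
up to the net outflow of `G` at `o`, which is 4. A node of a block has net outflow at most 2, with
equality only at the center of an outfork, and `o` lies in at most two blocks; hence `o` is the
common center of two outforks. Their four tips are dead ends, so they lie in no other block, and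
every edge of `G` touching `o` or a tip is one of the four edges of these outforks: the component
of `o` is the out-star. Reversing all edges maps blocks to blocks and exchanges inforks with
outforks, which gives the case of four incoming edges.
-/

/-- The six block shapes: spike, triangle, infork, outfork, diamond, square. -/
inductive BlockShape : Type
  | spike | triangle | infork | outfork | diamond | square
  deriving DecidableEq

namespace BlockShape

/-- Number of nodes of each block shape. -/
def numNodes : BlockShape → ℕ
  | spike => 2
  | triangle => 3
  | infork => 3
  | outfork => 3
  | diamond => 4
  | square => 5

/-- The directed edges of each block shape.
For the spike the nodes are `x = 0, y = 1` with edge `x → y`.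
For the triangle the nodes are `0, 1, 2` with edges `0 → 1 → 2 → 0`.
For the infork the nodes are `x = 0, y = 1, c = 2` with edges `x → c`, `y → c`.
For the outfork the nodes are `x = 0, y = 1, c = 2` with edges `c → x`, `c → y`.
For the diamond the nodes are `p = 0, q = 1, x = 2, y = 3` with boundary edges
`p → x, x → q, q → y, y → p` and mid-edge `q → p`.
For the square the nodes are the center `c = 0` and corners `v1 = 1, …, v4 = 4`, with
edges `v1 → v2 → v3 → v4 → v1`, `c → v1`, `v2 → c`, `c → v3`, `v4 → c`. -/
def edges : (s : BlockShape) → List (Fin s.numNodes × Fin s.numNodes)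
  | spike => ([(0, 1)] : List (Fin 2 × Fin 2))
  | triangle => ([(0, 1), (1, 2), (2, 0)] : List (Fin 3 × Fin 3))
  | infork => ([(0, 2), (1, 2)] : List (Fin 3 × Fin 3))
  | outfork => ([(2, 0), (2, 1)] : List (Fin 3 × Fin 3))
  | diamond => ([(0, 2), (2, 1), (1, 3), (3, 0), (1, 0)] : List (Fin 4 × Fin 4))
  | square => ([(1, 2), (2, 3), (3, 4), (4, 1), (0, 1), (2, 0), (0, 3), (4, 0)] :
      List (Fin 5 × Fin 5))

/-- The outlets (white nodes) of each block shape. -/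
def IsOutlet : (s : BlockShape) → Fin s.numNodes → Prop
  | spike, _ => True
  | triangle, _ => True
  | infork, i => (i : ℕ) = 2
  | outfork, i => (i : ℕ) = 2
  | diamond, i => (i : ℕ) = 0 ∨ (i : ℕ) = 1
  | square, i => (i : ℕ) = 0

/-- The degree of a node inside its block (number of incident edges). -/
def blockDeg (s : BlockShape) (i : Fin s.numNodes) : ℕ :=
  s.edges.countP fun e => decide (e.1 = i) || decide (e.2 = i)

end BlockShape

/-- A directed multigraph on a vertex type `V` is given by its edge multiplicity
function `G : V → V → ℕ`.  It is a directed graph in our sense if it has no loops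
and no 2-cycles. -/
def IsDiGraph {V : Type} (G : V → V → ℕ) : Prop :=
  (∀ v, G v v = 0) ∧ ∀ x y, G x y = 0 ∨ G y x = 0

/-- Degree of a node: the number of incident edges counted with multiplicity. -/
def degree {V : Type} [Fintype V] (G : V → V → ℕ) (v : V) : ℕ :=
  ∑ w, (G v w + G w v)

/-- Two nodes are adjacent if some edge joins them (in either direction). -/
def Adj {V : Type} (G : V → V → ℕ) (x y : V) : Prop := 0 < G x y + G y x

/-- `Reach G x y` : `y` lies in the connected component of `x`. -/
def Reach {V : Type} (G : V → V → ℕ) : V → V → Prop := Relation.ReflTransGen (Adj G)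

/-- The connected component of a node, as a finset. -/
noncomputable def component {V : Type} [Fintype V] (G : V → V → ℕ) (v : V) : Finset V :=
  letI := Classical.decPred fun w => Reach G v w
  Finset.univ.filter (Reach G v)

/-- Total number of block edges mapped onto the ordered pair `(x, y)` by the gluing data. -/
def blockMult {V : Type} [DecidableEq V] (n : ℕ) (shape : Fin n → BlockShape)
    (emb : (b : Fin n) → Fin (shape b).numNodes → V) (x y : V) : ℕ :=
  ∑ b : Fin n, (shape b).edges.countP fun e => decide (emb b e.1 = x ∧ emb b e.2 = y)

/-- A block decomposition of the directed multigraph `G` : a finite collection of blocks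
together with an identification of their nodes with the nodes of `G` such that
* each block is embedded injectively,
* nodes of two distinct blocks may be identified only if both are outlets,
* each outlet is identified with at most one other outlet (no vertex lies in three blocks),
* every vertex of `G` comes from some block, and
* the multiplicity of each edge of `G` is the number of block edges giving it minus the
  number of block edges giving the reversed edge (two parallel edges with the same
  direction are kept as a double edge; two parallel edges with opposite directions
  annihilate each other). -/
structure BlockDecomposition {V : Type} [Fintype V] [DecidableEq V] (G : V → V → ℕ) :
    Type where
  n : ℕ
  shape : Fin n → BlockShape
  emb : (b : Fin n) → Fin (shape b).numNodes → V
  emb_inj : ∀ b, Function.Injective (emb b)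
  glue_outlets : ∀ (b c : Fin n) (i : Fin (shape b).numNodes) (j : Fin (shape c).numNodes),
    emb b i = emb c j → b ≠ c → (shape b).IsOutlet i ∧ (shape c).IsOutlet j
  atMostTwo : ∀ (b c d : Fin n) (i : Fin (shape b).numNodes) (j : Fin (shape c).numNodes)
    (k : Fin (shape d).numNodes), emb b i = emb c j → emb b i = emb d k →
    b = c ∨ b = d ∨ c = d
  covers : ∀ v : V, ∃ b i, emb b i = v
  edge_eq : ∀ x y : V, G x y = blockMult n shape emb x y - blockMult n shape emb y x

/-- The number of block edges of a decomposition lying over the ordered pair `(x, y)`. -/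
def BlockDecomposition.mult {V : Type} [Fintype V] [DecidableEq V] {G : V → V → ℕ}
    (D : BlockDecomposition G) : V → V → ℕ :=
  blockMult D.n D.shape D.emb

/-- A graph is (block-)decomposable if it admits a block decomposition. -/
def Decomposable {V : Type} [Fintype V] [DecidableEq V] (G : V → V → ℕ) : Prop :=
  Nonempty (BlockDecomposition G)

/-- The edge `e` of block `b` is annihilated in the decomposition `D` : some edge of
another block lies over the same pair of vertices with the opposite direction. -/
def BlockDecomposition.EdgeAnnihilated {V : Type} [Fintype V] [DecidableEq V]
    {G : V → V → ℕ} (D : BlockDecomposition G) (b : Fin D.n)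
    (e : Fin (D.shape b).numNodes × Fin (D.shape b).numNodes) : Prop :=
  e ∈ (D.shape b).edges ∧
    ∃ (c : Fin D.n) (f : Fin (D.shape c).numNodes × Fin (D.shape c).numNodes),
      c ≠ b ∧ f ∈ (D.shape c).edges ∧ D.emb c f.1 = D.emb b e.2 ∧ D.emb c f.2 = D.emb b e.1

theorem List.sum_countP_and_eq_countP {α β : Type*} [Fintype β] [DecidableEq β]
    (l : List α) (p : α → Prop) [DecidablePred p] (g : α → β) :
    ∑ y, l.countP (fun a => decide (p a ∧ g a = y)) = l.countP (fun a => decide (p a)) := by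
  induction l with
  | nil => simp
  | cons a l ih =>
    simp only [List.countP_cons, Finset.sum_add_distrib, ih, add_right_inj]
    by_cases h : p a <;> simp [h]

namespace BlockShape

def outDeg (s : BlockShape) (i : Fin s.numNodes) : ℕ := s.edges.countP (·.1 = i)

def inDeg (s : BlockShape) (i : Fin s.numNodes) : ℕ := s.edges.countP (·.2 = i)

theorem outDeg_le_inDeg_add_two : ∀ (s : BlockShape) (i : Fin s.numNodes),
    s.outDeg i ≤ s.inDeg i + 2 := by
  intro s; cases s <;> decide

theorem eq_outfork_of_outDeg_eq_inDeg_add_two : ∀ (s : BlockShape) (i : Fin s.numNodes),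
    s.outDeg i = s.inDeg i + 2 → s = outfork ∧ (i : ℕ) = 2 := by
  intro s; cases s <;> decide

section EdgeMult

variable {V : Type} [DecidableEq V]

def edgeMult (s : BlockShape) (f : Fin s.numNodes → V) (x y : V) : ℕ :=
  s.edges.countP fun e => decide (f e.1 = x ∧ f e.2 = y)

theorem edgeMult_eq_zero {s : BlockShape} {f : Fin s.numNodes → V} {x y : V}
    (h : (∀ k, f k ≠ x) ∨ ∀ k, f k ≠ y) : s.edgeMult f x y = 0 := by
  refine List.countP_eq_zero.2 fun e _ he => ?_
  simp only [decide_eq_true_eq] at he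
  exact h.elim (· e.1 he.1) (· e.2 he.2)

variable [Fintype V]

theorem sum_edgeMult_apply_left {s : BlockShape} {f : Fin s.numNodes → V}
    (hf : Function.Injective f) (i : Fin s.numNodes) :
    ∑ y, s.edgeMult f (f i) y = s.outDeg i := by
  simp only [edgeMult]
  rw [List.sum_countP_and_eq_countP s.edges (fun e => f e.1 = f i) (fun e => f e.2)]
  simp only [outDeg, hf.eq_iff]

theorem sum_edgeMult_apply_right {s : BlockShape} {f : Fin s.numNodes → V}
    (hf : Function.Injective f) (i : Fin s.numNodes) :
    ∑ x, s.edgeMult f x (f i) = s.inDeg i := by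
  rw [inDeg, ← List.sum_countP_and_eq_countP s.edges (·.2 = i) (fun e => f e.1)]
  refine Finset.sum_congr rfl fun x _ => List.countP_congr fun e _ => ?_
  simp only [decide_eq_true_eq, hf.eq_iff, and_comm]

def netFlux (s : BlockShape) (f : Fin s.numNodes → V) (v : V) : ℤ :=
  ∑ y, (s.edgeMult f v y : ℤ) - ∑ x, (s.edgeMult f x v : ℤ)

theorem netFlux_eq_zero {s : BlockShape} {f : Fin s.numNodes → V} {v : V}
    (h : ∀ k, f k ≠ v) : s.netFlux f v = 0 := by
  simp [netFlux, edgeMult_eq_zero (Or.inl h), edgeMult_eq_zero (Or.inr h)]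

theorem netFlux_apply {s : BlockShape} {f : Fin s.numNodes → V} (hf : Function.Injective f)
    (i : Fin s.numNodes) : s.netFlux f (f i) = s.outDeg i - s.inDeg i := by
  rw [netFlux, ← Nat.cast_sum, ← Nat.cast_sum, sum_edgeMult_apply_left hf,
    sum_edgeMult_apply_right hf]

theorem netFlux_le_two {s : BlockShape} {f : Fin s.numNodes → V} (hf : Function.Injective f)
    (v : V) : s.netFlux f v ≤ 2 := by
  by_cases h : ∃ i, f i = v
  · obtain ⟨i, rfl⟩ := h
    have := s.outDeg_le_inDeg_add_two i
    rw [netFlux_apply hf]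
    omega
  · push Not at h
    rw [netFlux_eq_zero h]
    norm_num

theorem eq_outfork_of_netFlux_eq_two {s : BlockShape} {f : Fin s.numNodes → V}
    (hf : Function.Injective f) {v : V} (h : s.netFlux f v = 2) :
    s = outfork ∧ ∃ i, f i = v ∧ (i : ℕ) = 2 := by
  obtain ⟨i, rfl⟩ : ∃ i, f i = v := by
    by_contra! hv
    rw [netFlux_eq_zero hv] at h
    norm_num at h
  rw [netFlux_apply hf] at h
  obtain ⟨hs, hi⟩ := s.eq_outfork_of_outDeg_eq_inDeg_add_two i (by omega)
  exact ⟨hs, i, rfl, hi⟩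

end EdgeMult

variable {V : Type} [DecidableEq V]

theorem outfork_edgeMult (f : Fin 3 → V) (x y : V) :
    outfork.edgeMult f x y =
      (if f 2 = x ∧ f 0 = y then 1 else 0) + (if f 2 = x ∧ f 1 = y then 1 else 0) := by
  simp only [edgeMult, edges]
  -- `erw`: the edge list has type `List (Fin outfork.numNodes × _)`, only defeq to `Fin 3`
  erw [List.countP_cons, List.countP_cons, List.countP_nil]
  simp only [decide_eq_true_eq, zero_add]
  exact add_comm _ _

theorem exists_leaves_of_eq_outfork {s : BlockShape} (hs : s = outfork)
    (f : Fin s.numNodes → V) (i : Fin s.numNodes) (hi : (i : ℕ) = 2) :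
    ∃ k₁ k₂ : Fin s.numNodes, k₁ ≠ k₂ ∧ k₁ ≠ i ∧ k₂ ≠ i ∧ ¬ s.IsOutlet k₁ ∧ ¬ s.IsOutlet k₂ ∧
      ∀ x y, s.edgeMult f x y =
        (if f i = x ∧ f k₁ = y then 1 else 0) + (if f i = x ∧ f k₂ = y then 1 else 0) := by
  subst hs
  obtain rfl : i = (2 : Fin 3) := Fin.ext hi
  exact ⟨(0 : Fin 3), (1 : Fin 3), (by decide : (0 : Fin 3) ≠ 1), (by decide : (0 : Fin 3) ≠ 2),
    (by decide : (1 : Fin 3) ≠ 2), (by decide : (0 : ℕ) ≠ 2), (by decide : (1 : ℕ) ≠ 2),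
    outfork_edgeMult f⟩

def rev : BlockShape → BlockShape
  | spike => spike
  | triangle => triangle
  | infork => outfork
  | outfork => infork
  | diamond => diamond
  | square => square

/-- The relabelling under which `s.rev` is `s` with all edges reversed. -/
def fromRev : (s : BlockShape) → Fin s.rev.numNodes → Fin s.numNodes
  | spike, i => (![1, 0] : Fin 2 → Fin 2) i
  | triangle, i => (![0, 2, 1] : Fin 3 → Fin 3) i
  | infork, i => i
  | outfork, i => i
  | diamond, i => (![1, 0, 2, 3] : Fin 4 → Fin 4) i
  | square, i => (![0, 2, 1, 4, 3] : Fin 5 → Fin 5) i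

theorem fromRev_bijective : ∀ s : BlockShape, Function.Bijective s.fromRev := by
  intro s; cases s <;> decide

theorem map_swap_edges_rev_perm : ∀ s : BlockShape,
    (s.rev.edges.map fun e => (s.fromRev e.2, s.fromRev e.1)).Perm s.edges := by
  intro s; cases s <;> decide

theorem isOutlet_rev_iff : ∀ (s : BlockShape) (i : Fin s.rev.numNodes),
    s.rev.IsOutlet i ↔ s.IsOutlet (s.fromRev i) := by
  intro s; cases s <;> simp only [rev, IsOutlet, fromRev] <;> decide

theorem rev_eq_outfork_iff {s : BlockShape} : s.rev = outfork ↔ s = infork := by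
  cases s <;> simp [rev]

theorem val_fromRev_of_eq_infork {s : BlockShape} (hs : s = infork) (i : Fin s.rev.numNodes) :
    (s.fromRev i : ℕ) = i := by
  subst hs; rfl

theorem edgeMult_rev (s : BlockShape) (f : Fin s.numNodes → V) (x y : V) :
    s.rev.edgeMult (f ∘ s.fromRev) x y = s.edgeMult f y x := by
  rw [edgeMult, edgeMult, ← (map_swap_edges_rev_perm s).countP_eq, List.countP_map]
  refine List.countP_congr fun e _ => ?_
  simp only [Function.comp, decide_eq_true_eq, and_comm]

end BlockShape

section Component

variable {V : Type} [Fintype V] {G : V → V → ℕ}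

theorem mem_component_iff {v w : V} : w ∈ component G v ↔ Reach G v w := by
  simp [component]

theorem component_eq_of_adj_closed {o : V} {S : Finset V} (ho : o ∈ S)
    (hclosed : ∀ x ∈ S, ∀ y, Adj G x y → y ∈ S) (hreach : ∀ x ∈ S, Reach G o x) :
    component G o = S := by
  ext x
  refine mem_component_iff.trans ⟨fun h => ?_, hreach x⟩
  induction h with
  | refl => exact ho
  | tail _ hxy ih => exact hclosed _ ih _ hxy

theorem degree_flip (w : V) : degree (flip G) w = degree G w :=
  Finset.sum_congr rfl fun _ _ => Nat.add_comm _ _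

theorem component_flip (v : V) : component (flip G) v = component G v := by
  have hAdj : Adj (flip G) = Adj G := by
    funext x y
    unfold Adj flip
    rw [Nat.add_comm]
  ext x
  simp only [mem_component_iff, Reach, hAdj]

end Component

section Star

variable {V : Type} [DecidableEq V] {G : V → V → ℕ} {o : V} {T : Finset V}

/-- On the edges touching `insert o T`, the graph `G` is the star with center `o` and leaves `T`,
all edges pointing away from `o`. -/
structure IsOutStar (G : V → V → ℕ) (o : V) (T : Finset V) : Prop where
  center_notMem : o ∉ T
  apply_eq : ∀ x y, x ∈ insert o T ∨ y ∈ insert o T → G x y = if x = o ∧ y ∈ T then 1 else 0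

namespace IsOutStar

theorem apply_center (h : IsOutStar G o T) (y : V) : G o y = if y ∈ T then 1 else 0 := by
  simp [h.apply_eq o y (Or.inl (Finset.mem_insert_self o T))]

theorem apply_to_center (h : IsOutStar G o T) (x : V) : G x o = 0 := by
  simp [h.apply_eq x o (Or.inr (Finset.mem_insert_self o T)), h.center_notMem]

theorem apply_center_of_mem (h : IsOutStar G o T) {y : V} (hy : y ∈ T) : G o y = 1 := by
  simp [h.apply_center, hy]

theorem mem_of_apply_center_ne_zero (h : IsOutStar G o T) {y : V} (hy : G o y ≠ 0) : y ∈ T := by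
  by_contra hyT
  simp [h.apply_center, hyT] at hy

variable [Fintype V]

theorem degree_eq_one (h : IsOutStar G o T) {t : V} (ht : t ∈ T) : degree G t = 1 := by
  have hto : t ≠ o := fun e => h.center_notMem (e ▸ ht)
  have hS : t ∈ insert o T := Finset.mem_insert_of_mem ht
  have hterm : ∀ w, G t w + G w t = if w = o then 1 else 0 := fun w => by
    rw [h.apply_eq t w (Or.inl hS), h.apply_eq w t (Or.inr hS)]
    by_cases hw : w = o <;> simp [hw, hto, ht]
  simp [degree, hterm]

theorem component_eq (h : IsOutStar G o T) : component G o = insert o T := by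
  refine component_eq_of_adj_closed (Finset.mem_insert_self o T) (fun x hx y hxy => ?_)
    (fun x hx => ?_)
  · rw [Adj, h.apply_eq x y (Or.inl hx), h.apply_eq y x (Or.inr hx)] at hxy
    split_ifs at hxy <;> simp_all
  · rcases Finset.mem_insert.1 hx with rfl | hxT
    · exact Relation.ReflTransGen.refl
    · refine Relation.ReflTransGen.single ?_
      simp [Adj, h.apply_center, hxT]

theorem card_component (h : IsOutStar G o T) : (component G o).card = T.card + 1 := by
  rw [h.component_eq, Finset.card_insert_of_notMem h.center_notMem]

theorem mem_of_mem_component (h : IsOutStar G o T) {x : V} (hx : x ∈ component G o)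
    (hxo : x ≠ o) : x ∈ T := by
  rw [h.component_eq] at hx
  exact (Finset.mem_insert.1 hx).resolve_left hxo

end IsOutStar

end Star

theorem blockMult_eq_sum_edgeMult {V : Type} [DecidableEq V] {n : ℕ} {shape : Fin n → BlockShape}
    {emb : (b : Fin n) → Fin (shape b).numNodes → V} (x y : V) :
    blockMult n shape emb x y = ∑ b, (shape b).edgeMult (emb b) x y := rfl

namespace BlockDecomposition

open BlockShape

variable {V : Type} [Fintype V] [DecidableEq V] {G : V → V → ℕ} (D : BlockDecomposition G)

theorem mult_apply (x y : V) : D.mult x y = ∑ b, (D.shape b).edgeMult (D.emb b) x y :=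
  blockMult_eq_sum_edgeMult x y

theorem apply_sub_apply (x y : V) : (G x y : ℤ) - G y x = D.mult x y - D.mult y x := by
  have h₁ := D.edge_eq x y
  have h₂ := D.edge_eq y x
  simp only [BlockDecomposition.mult]
  omega

theorem mult_eq_sum_of_subset {x y : V} (B : Finset (Fin D.n))
    (hB : ∀ c ∉ B, (∀ k, D.emb c k ≠ x) ∨ ∀ k, D.emb c k ≠ y) :
    D.mult x y = ∑ c ∈ B, (D.shape c).edgeMult (D.emb c) x y := by
  rw [mult_apply]
  exact (Finset.sum_subset (Finset.subset_univ B) fun c _ hc => edgeMult_eq_zero (hB c hc)).symm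

theorem sum_netFlux (v : V) :
    ∑ b, (D.shape b).netFlux (D.emb b) v = ∑ y, (G v y : ℤ) - ∑ x, (G x v : ℤ) := by
  calc ∑ b, (D.shape b).netFlux (D.emb b) v
      = ∑ y, (D.mult v y : ℤ) - ∑ x, (D.mult x v : ℤ) := by
        simp only [netFlux, mult_apply, Nat.cast_sum, Finset.sum_sub_distrib]
        congr 1 <;> exact Finset.sum_comm
    _ = ∑ y, ((G v y : ℤ) - G y v) := by
        rw [← Finset.sum_sub_distrib]
        exact Finset.sum_congr rfl fun y _ => (D.apply_sub_apply v y).symm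
    _ = ∑ y, (G v y : ℤ) - ∑ x, (G x v : ℤ) := Finset.sum_sub_distrib _ _

theorem eq_or_eq_of_emb_eq {b c d : Fin D.n} {i : Fin (D.shape b).numNodes}
    {j : Fin (D.shape c).numNodes} {k : Fin (D.shape d).numNodes} (hbc : b ≠ c)
    (hij : D.emb b i = D.emb c j) (hk : D.emb d k = D.emb b i) : d = b ∨ d = c := by
  rcases D.atMostTwo b c d i j k hij hk.symm with h | h | h
  · exact absurd h hbc
  · exact Or.inl h.symm
  · exact Or.inr h.symm

theorem eq_of_emb_eq_of_not_isOutlet {b c : Fin D.n} {k : Fin (D.shape b).numNodes}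
    {l : Fin (D.shape c).numNodes} (hk : ¬ (D.shape b).IsOutlet k) (h : D.emb c l = D.emb b k) :
    c = b := by
  by_contra hcb
  exact hk (D.glue_outlets c b l k h hcb).2

theorem exists_outforks_of_netFlux {o : V} (hflux : ∑ y, (G o y : ℤ) - ∑ x, (G x o : ℤ) = 4) :
    ∃ b b' : Fin D.n, b ≠ b' ∧
      D.shape b = BlockShape.outfork ∧ D.shape b' = BlockShape.outfork ∧
      (∃ i, D.emb b i = o ∧ (i : ℕ) = 2) ∧ (∃ j, D.emb b' j = o ∧ (j : ℕ) = 2) ∧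
      ∀ (c : Fin D.n) (k : Fin (D.shape c).numNodes), D.emb c k = o → c = b ∨ c = b' := by
  set φ : Fin D.n → ℤ := fun b => (D.shape b).netFlux (D.emb b) o
  have hsum : ∑ b, φ b = 4 := (D.sum_netFlux o).trans hflux
  have hle : ∀ b, φ b ≤ 2 := fun b => netFlux_le_two (D.emb_inj b) o
  obtain ⟨b, i, hi⟩ := D.covers o
  obtain ⟨b', hb'b, hb'⟩ : ∃ b', b' ≠ b ∧ 0 < φ b' := by
    by_contra! h
    have hrest : ∑ c ∈ Finset.univ.erase b, φ c ≤ 0 :=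
      Finset.sum_nonpos fun c hc => h c (Finset.ne_of_mem_erase hc)
    have := hle b
    rw [← Finset.add_sum_erase _ _ (Finset.mem_univ b)] at hsum
    omega
  obtain ⟨j, hj⟩ : ∃ j, D.emb b' j = o := by
    by_contra! hj
    exact hb'.ne' (netFlux_eq_zero hj)
  have honly : ∀ c k, D.emb c k = o → c = b ∨ c = b' := fun c k hk =>
    D.eq_or_eq_of_emb_eq hb'b.symm (hi.trans hj.symm) (hk.trans hi.symm)
  have hpair : φ b + φ b' = 4 := by
    rw [← hsum, Fintype.sum_eq_add b b' hb'b.symm]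
    rintro c ⟨hcb, hcb'⟩
    exact netFlux_eq_zero fun k hk => (honly c k hk).elim hcb hcb'
  obtain ⟨hs, i, hi, hi2⟩ := eq_outfork_of_netFlux_eq_two (D.emb_inj b)
    (show φ b = 2 by linarith [hle b, hle b'])
  obtain ⟨hs', j, hj, hj2⟩ := eq_outfork_of_netFlux_eq_two (D.emb_inj b')
    (show φ b' = 2 by linarith [hle b, hle b'])
  exact ⟨b, b', hb'b.symm, hs, hs', ⟨i, hi, hi2⟩, ⟨j, hj, hj2⟩, honly⟩

theorem isOutStar_of_mult {o : V} {T : Finset V} (hoT : o ∉ T)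
    (hmult : ∀ x y, x ∈ insert o T ∨ y ∈ insert o T →
      D.mult x y = if x = o ∧ y ∈ T then 1 else 0) :
    IsOutStar G o T where
  center_notMem := hoT
  apply_eq x y hxy := by
    rw [D.edge_eq x y]
    change D.mult x y - D.mult y x = _
    rw [hmult x y hxy, hmult y x hxy.symm]
    split_ifs <;> simp_all

theorem exists_isOutStar_of_outforks {o : V} {b b' : Fin D.n} (hbb' : b ≠ b')
    (hs : D.shape b = BlockShape.outfork) (hs' : D.shape b' = BlockShape.outfork)
    (hi : ∃ i, D.emb b i = o ∧ (i : ℕ) = 2) (hj : ∃ j, D.emb b' j = o ∧ (j : ℕ) = 2)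
    (honly : ∀ (c : Fin D.n) (k : Fin (D.shape c).numNodes), D.emb c k = o → c = b ∨ c = b') :
    ∃ T : Finset V, T.card = 4 ∧ IsOutStar G o T := by
  obtain ⟨i, rfl, hi⟩ := hi
  obtain ⟨j, hj, hj2⟩ := hj
  obtain ⟨k₁, k₂, h12, h1i, h2i, hk₁, hk₂, hb⟩ := exists_leaves_of_eq_outfork hs (D.emb b) i hi
  obtain ⟨k₃, k₄, h34, h3j, h4j, hk₃, hk₄, hb'⟩ :=
    exists_leaves_of_eq_outfork hs' (D.emb b') j hj2
  rw [hj] at hb'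
  have hinj := D.emb_inj b
  have hinj' := D.emb_inj b'
  have hleaf {k l} (hk : ¬ (D.shape b).IsOutlet k) : D.emb b k ≠ D.emb b' l := fun h =>
    hbb' (D.eq_of_emb_eq_of_not_isOutlet hk h.symm).symm
  set T : Finset V := {D.emb b k₁, D.emb b k₂, D.emb b' k₃, D.emb b' k₄}
  have hoT : D.emb b i ∉ T := by
    simp only [T, Finset.mem_insert, Finset.mem_singleton, not_or]
    exact ⟨hinj.ne h1i.symm, hinj.ne h2i.symm, hj ▸ hinj'.ne h3j.symm, hj ▸ hinj'.ne h4j.symm⟩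
  have hsum (g : V → ℕ) :
      ∑ t ∈ T, g t = g (D.emb b k₁) + g (D.emb b k₂) + (g (D.emb b' k₃) + g (D.emb b' k₄)) := by
    have := hleaf (l := k₃) hk₁
    have := hleaf (l := k₄) hk₁
    have := hleaf (l := k₃) hk₂
    have := hleaf (l := k₄) hk₂
    rw [Finset.sum_insert, Finset.sum_insert, Finset.sum_pair, add_assoc] <;>
      simp_all [hinj.eq_iff, hinj'.eq_iff]
  have houtside : ∀ c ∉ ({b, b'} : Finset (Fin D.n)), ∀ k, D.emb c k ∉ insert (D.emb b i) T := by
    intro c hc k hk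
    simp only [Finset.mem_insert, Finset.mem_singleton, not_or] at hc
    simp only [T, Finset.mem_insert, Finset.mem_singleton] at hk
    rcases hk with hk | hk | hk | hk | hk
    · exact (honly c k hk).elim hc.1 hc.2
    · exact hc.1 (D.eq_of_emb_eq_of_not_isOutlet hk₁ hk)
    · exact hc.1 (D.eq_of_emb_eq_of_not_isOutlet hk₂ hk)
    · exact hc.2 (D.eq_of_emb_eq_of_not_isOutlet hk₃ hk)
    · exact hc.2 (D.eq_of_emb_eq_of_not_isOutlet hk₄ hk)
  refine ⟨T, by simp [Finset.card_eq_sum_ones, hsum], D.isOutStar_of_mult hoT fun x y hxy => ?_⟩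
  rw [D.mult_eq_sum_of_subset {b, b'} fun c hc => hxy.imp
      (fun hx k hk => houtside c hc k (hk ▸ hx)) (fun hy k hk => houtside c hc k (hk ▸ hy)),
    Finset.sum_pair hbb', hb, hb', ← hsum fun t => if D.emb b i = x ∧ t = y then 1 else 0]
  by_cases hx : x = D.emb b i
  · simp [hx]
  · simp [hx, Ne.symm hx]

def transpose : BlockDecomposition (flip G) where
  n := D.n
  shape b := (D.shape b).rev
  emb b := D.emb b ∘ (D.shape b).fromRev
  emb_inj b := (D.emb_inj b).comp (fromRev_bijective _).injective
  glue_outlets b c i j h hbc := by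
    simpa only [isOutlet_rev_iff] using D.glue_outlets b c _ _ h hbc
  atMostTwo b c d i j k := D.atMostTwo b c d _ _ _
  covers v := by
    obtain ⟨b, i, rfl⟩ := D.covers v
    obtain ⟨i', rfl⟩ := (fromRev_bijective _).surjective i
    exact ⟨b, i', rfl⟩
  edge_eq x y := by
    simp only [blockMult_eq_sum_edgeMult, edgeMult_rev]
    exact D.edge_eq y x

theorem exists_inforks_of_netFlux {o : V} (hflux : ∑ x, (G x o : ℤ) - ∑ y, (G o y : ℤ) = 4) :
    ∃ b b' : Fin D.n, b ≠ b' ∧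
      D.shape b = BlockShape.infork ∧ D.shape b' = BlockShape.infork ∧
      (∃ i, D.emb b i = o ∧ (i : ℕ) = 2) ∧ (∃ j, D.emb b' j = o ∧ (j : ℕ) = 2) ∧
      ∀ (c : Fin D.n) (k : Fin (D.shape c).numNodes), D.emb c k = o → c = b ∨ c = b' := by
  obtain ⟨b, b', hbb', hs, hs', ⟨i, hi, hi2⟩, ⟨j, hj, hj2⟩, honly⟩ :=
    D.transpose.exists_outforks_of_netFlux hflux
  replace hs : D.shape b = infork := rev_eq_outfork_iff.1 hs
  replace hs' : D.shape b' = infork := rev_eq_outfork_iff.1 hs'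
  refine ⟨b, b', hbb', hs, hs', ⟨_, hi, (val_fromRev_of_eq_infork hs i).trans hi2⟩,
    ⟨_, hj, (val_fromRev_of_eq_infork hs' j).trans hj2⟩, fun c k hk => ?_⟩
  obtain ⟨k', rfl⟩ := (fromRev_bijective _).surjective k
  exact honly c k' hk

end BlockDecomposition

section Decomposable

variable {V : Type} [Fintype V] [DecidableEq V] {G : V → V → ℕ}

theorem Decomposable.flip (hdec : Decomposable G) : Decomposable (flip G) :=
  hdec.map BlockDecomposition.transpose

theorem Decomposable.exists_isOutStar (hdec : Decomposable G) {o : V}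
    (hflux : ∑ y, (G o y : ℤ) - ∑ x, (G x o : ℤ) = 4) :
    ∃ T : Finset V, T.card = 4 ∧ IsOutStar G o T := by
  obtain ⟨D⟩ := hdec
  obtain ⟨b, b', hbb', hs, hs', hi, hj, honly⟩ := D.exists_outforks_of_netFlux hflux
  exact D.exists_isOutStar_of_outforks hbb' hs hs' hi hj honly

end Decomposable

theorem stmt_9_general {V : Type} [Fintype V] [DecidableEq V] (G : V → V → ℕ)
    (hdec : Decomposable G) (o : V) :
    ((∑ w, G o w) = 4 ∧ (∑ w, G w o) = 0 →
      (∀ D : BlockDecomposition G, ∃ b b' : Fin D.n, b ≠ b' ∧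
        D.shape b = BlockShape.outfork ∧ D.shape b' = BlockShape.outfork ∧
        (∃ i, D.emb b i = o ∧ (i : ℕ) = 2) ∧ (∃ j, D.emb b' j = o ∧ (j : ℕ) = 2) ∧
        (∀ (c : Fin D.n) (k : Fin (D.shape c).numNodes), D.emb c k = o → c = b ∨ c = b')) ∧
      (∀ w, G o w ≠ 0 → degree G w = 1) ∧
      (component G o).card = 5 ∧
      (∀ x ∈ component G o, x ≠ o → G o x = 1 ∧ G x o = 0 ∧ degree G x = 1)) ∧
    ((∑ w, G w o) = 4 ∧ (∑ w, G o w) = 0 →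
      (∀ D : BlockDecomposition G, ∃ b b' : Fin D.n, b ≠ b' ∧
        D.shape b = BlockShape.infork ∧ D.shape b' = BlockShape.infork ∧
        (∃ i, D.emb b i = o ∧ (i : ℕ) = 2) ∧ (∃ j, D.emb b' j = o ∧ (j : ℕ) = 2) ∧
        (∀ (c : Fin D.n) (k : Fin (D.shape c).numNodes), D.emb c k = o → c = b ∨ c = b')) ∧
      (∀ w, G w o ≠ 0 → degree G w = 1) ∧
      (component G o).card = 5 ∧
      (∀ x ∈ component G o, x ≠ o → G x o = 1 ∧ G o x = 0 ∧ degree G x = 1)) := by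
  constructor
  · rintro ⟨hout, hin⟩
    have hflux : ∑ y, (G o y : ℤ) - ∑ x, (G x o : ℤ) = 4 := by
      rw [← Nat.cast_sum, ← Nat.cast_sum, hout, hin]; norm_num
    obtain ⟨T, hT, hstar⟩ := hdec.exists_isOutStar hflux
    refine ⟨fun D => D.exists_outforks_of_netFlux hflux,
      fun w hw => hstar.degree_eq_one (hstar.mem_of_apply_center_ne_zero hw),
      by rw [hstar.card_component, hT], fun x hx hxo => ?_⟩
    have hxT := hstar.mem_of_mem_component hx hxo
    exact ⟨hstar.apply_center_of_mem hxT, hstar.apply_to_center x, hstar.degree_eq_one hxT⟩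
  · rintro ⟨hin, hout⟩
    have hflux : ∑ x, (G x o : ℤ) - ∑ y, (G o y : ℤ) = 4 := by
      rw [← Nat.cast_sum, ← Nat.cast_sum, hout, hin]; norm_num
    obtain ⟨T, hT, hstar⟩ := hdec.flip.exists_isOutStar (o := o) hflux
    rw [← component_flip]
    refine ⟨fun D => D.exists_inforks_of_netFlux hflux,
      fun w hw =>
        degree_flip (G := G) w ▸ hstar.degree_eq_one (hstar.mem_of_apply_center_ne_zero hw),
      by rw [hstar.card_component, hT], fun x hx hxo => ?_⟩
    have hxT := hstar.mem_of_mem_component hx hxo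
    exact ⟨hstar.apply_center_of_mem hxT, hstar.apply_to_center x,
      degree_flip (G := G) x ▸ hstar.degree_eq_one hxT⟩

/-- if a node `o` of a block-decomposable graph has four outgoing edges
and no incoming edges (resp. four incoming and no outgoing), then in every block
decomposition `o` is the identification of the outlets of two outfork (resp. infork)
blocks; each of the four neighbors has degree 1 and the connected component of `o`
is the 5-node star with all edges directed away from (resp. toward) `o`. -/
theorem stmt_9 {V : Type} [Fintype V] [DecidableEq V] (G : V → V → ℕ)
    (hG : IsDiGraph G) (hdec : Decomposable G) (o : V) :
    ((∑ w, G o w) = 4 ∧ (∑ w, G w o) = 0 →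
      (∀ D : BlockDecomposition G, ∃ b b' : Fin D.n, b ≠ b' ∧
        D.shape b = BlockShape.outfork ∧ D.shape b' = BlockShape.outfork ∧
        (∃ i, D.emb b i = o ∧ (i : ℕ) = 2) ∧ (∃ j, D.emb b' j = o ∧ (j : ℕ) = 2) ∧
        (∀ (c : Fin D.n) (k : Fin (D.shape c).numNodes), D.emb c k = o → c = b ∨ c = b')) ∧
      (∀ w, G o w ≠ 0 → degree G w = 1) ∧
      (component G o).card = 5 ∧
      (∀ x ∈ component G o, x ≠ o → G o x = 1 ∧ G x o = 0 ∧ degree G x = 1)) ∧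
    ((∑ w, G w o) = 4 ∧ (∑ w, G o w) = 0 →
      (∀ D : BlockDecomposition G, ∃ b b' : Fin D.n, b ≠ b' ∧
        D.shape b = BlockShape.infork ∧ D.shape b' = BlockShape.infork ∧
        (∃ i, D.emb b i = o ∧ (i : ℕ) = 2) ∧ (∃ j, D.emb b' j = o ∧ (j : ℕ) = 2) ∧
        (∀ (c : Fin D.n) (k : Fin (D.shape c).numNodes), D.emb c k = o → c = b ∨ c = b')) ∧
      (∀ w, G w o ≠ 0 → degree G w = 1) ∧
      (component G o).card = 5 ∧
      (∀ x ∈ component G o, x ≠ o → G x o = 1 ∧ G o x = 0 ∧ degree G x = 1)) :=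
  stmt_9_general G hdec o
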